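/- There exists a constant K > 0 such that for all α ∈ (0, 1] and all ψ ∈ (0, 3π/4]: |F_α(ψ) − 1| ≤ K·√α. -/
import Mathlib


open Real

/-- The correction factor appearing in the Poisson-resummed form of the SU(2) heat
kernel: `F_α(ψ) = 1 + Σ_{n≥1} e^{-4π²n²/α} (2 cosh(4πnψ/α) - (4πn/ψ) sinh(4πnψ/α))`. -/
noncomputable def Fcorr (α ψ : ℝ) : ℝ :=
  1 + ∑' n : ℕ, Real.exp (-4 * π ^ 2 * ((n : ℝ) + 1) ^ 2 / α) *
    (2 * Real.cosh (4 * π * ((n : ℝ) + 1) * ψ / α) -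
      (4 * π * ((n : ℝ) + 1) / ψ) * Real.sinh (4 * π * ((n : ℝ) + 1) * ψ / α))

lemma sinh_le_mul_exp {x : ℝ} (hx : 0 ≤ x) : Real.sinh x ≤ x * Real.exp x := by
  have h1 : Real.exp x * Real.exp (-x) = 1 := by rw [← Real.exp_add]; simp
  have h2 : (-(2*x)) + 1 ≤ Real.exp (-(2*x)) := Real.add_one_le_exp _
  have h3 : Real.exp (-(2*x)) = Real.exp (-x) * Real.exp (-x) := by
    rw [← Real.exp_add]; ring_nf
  have he : 0 < Real.exp x := Real.exp_pos x
  have he' : 0 < Real.exp (-x) := Real.exp_pos (-x)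
  rw [Real.sinh_eq]
  nlinarith [mul_le_mul_of_nonneg_left (h3 ▸ h2) he.le]

lemma cosh_le_exp' {x : ℝ} (hx : 0 ≤ x) : Real.cosh x ≤ Real.exp x := by
  rw [Real.cosh_eq]
  have : Real.exp (-x) ≤ Real.exp x := Real.exp_le_exp.2 (by linarith)
  linarith

set_option maxHeartbeats 1000000 in
lemma term_bound (α ψ : ℝ) (hα0 : 0 < α) (hα1 : α ≤ 1)
    (hψ0 : 0 < ψ) (hψ1 : ψ ≤ 3 * π / 4) (n : ℕ) :
    |Real.exp (-4 * π ^ 2 * ((n : ℝ) + 1) ^ 2 / α) *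
      (2 * Real.cosh (4 * π * ((n : ℝ) + 1) * ψ / α) -
        (4 * π * ((n : ℝ) + 1) / ψ) * Real.sinh (4 * π * ((n : ℝ) + 1) * ψ / α))| ≤
    (136 / π ^ 2) * Real.sqrt α * Real.exp (-(π ^ 2) / 4) ^ (n + 1) := by
  have hπ : 0 < π := Real.pi_pos
  set m : ℝ := (n : ℝ) + 1 with hmdef
  have hm : 1 ≤ m := by rw [hmdef]; exact le_add_of_nonneg_left (Nat.cast_nonneg n)
  have hm0 : 0 < m := by linarith
  set x : ℝ := 4 * π * m * ψ / α with hxdef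
  have hx : 0 ≤ x := by positivity
  have hB : 0 ≤ 4 * π * m / ψ := by positivity
  -- bound the bracket
  have hbr : |2 * Real.cosh x - (4 * π * m / ψ) * Real.sinh x| ≤
      (2 + 16 * π ^ 2 * m ^ 2 / α) * Real.exp x := by
    have hch : 0 ≤ Real.cosh x := (Real.cosh_pos _).le
    have hsh : 0 ≤ Real.sinh x := by
      rw [Real.sinh_eq]
      have := Real.exp_le_exp.2 (neg_le_self hx)
      linarith
    have h1 : |2 * Real.cosh x - (4 * π * m / ψ) * Real.sinh x| ≤
        2 * Real.cosh x + (4 * π * m / ψ) * Real.sinh x := by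
      rw [abs_sub_comm]
      have := abs_sub_abs_le_abs_sub ((4 * π * m / ψ) * Real.sinh x) (2 * Real.cosh x)
      rw [abs_sub_le_iff]
      constructor <;> nlinarith [mul_nonneg hB hsh, hch]
    have h2 : 2 * Real.cosh x ≤ 2 * Real.exp x := by
      linarith [cosh_le_exp' hx]
    have h3 : (4 * π * m / ψ) * Real.sinh x ≤ (16 * π ^ 2 * m ^ 2 / α) * Real.exp x := by
      have := sinh_le_mul_exp hx
      have hBx : (4 * π * m / ψ) * (x * Real.exp x) = (16 * π ^ 2 * m ^ 2 / α) * Real.exp x := by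
        rw [hxdef]; field_simp; ring
      calc (4 * π * m / ψ) * Real.sinh x ≤ (4 * π * m / ψ) * (x * Real.exp x) :=
            mul_le_mul_of_nonneg_left this hB
        _ = (16 * π ^ 2 * m ^ 2 / α) * Real.exp x := hBx
    linarith
  have hexp_pos : 0 < Real.exp (-4 * π ^ 2 * m ^ 2 / α) := Real.exp_pos _
  have habs : |Real.exp (-4 * π ^ 2 * m ^ 2 / α) *
      (2 * Real.cosh x - (4 * π * m / ψ) * Real.sinh x)| ≤
      (2 + 16 * π ^ 2 * m ^ 2 / α) * Real.exp (x + -4 * π ^ 2 * m ^ 2 / α) := by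
    rw [abs_mul, abs_of_pos hexp_pos, Real.exp_add]
    calc Real.exp (-4 * π ^ 2 * m ^ 2 / α) * |2 * Real.cosh x - (4 * π * m / ψ) * Real.sinh x|
        ≤ Real.exp (-4 * π ^ 2 * m ^ 2 / α) * ((2 + 16 * π ^ 2 * m ^ 2 / α) * Real.exp x) :=
          mul_le_mul_of_nonneg_left hbr hexp_pos.le
      _ = (2 + 16 * π ^ 2 * m ^ 2 / α) * (Real.exp x * Real.exp (-4 * π ^ 2 * m ^ 2 / α)) := by
          ring
  -- exponent comparison
  have hexp1 : Real.exp (x + -4 * π ^ 2 * m ^ 2 / α) ≤ Real.exp (-(π ^ 2) * m ^ 2 / α) := by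
    apply Real.exp_le_exp.2
    have hnum : 4 * π * m * ψ + -4 * π ^ 2 * m ^ 2 ≤ -(π ^ 2) * m ^ 2 := by
      nlinarith [mul_le_mul_of_nonneg_left hψ1 (by positivity : (0:ℝ) ≤ 4 * π * m),
        mul_le_mul_of_nonneg_left hm (by positivity : (0:ℝ) ≤ 3 * π ^ 2 * m)]
    have : x + -4 * π ^ 2 * m ^ 2 / α = (4 * π * m * ψ + -4 * π ^ 2 * m ^ 2) / α := by
      rw [hxdef]; field_simp
    rw [this]
    gcongr
  -- split exponential and absorb the polynomial prefactor
  have hsplit : Real.exp (-(π ^ 2) * m ^ 2 / α) =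
      Real.exp (-(π ^ 2 * m ^ 2 / (2 * α))) * Real.exp (-(π ^ 2 * m ^ 2 / (2 * α))) := by
    rw [← Real.exp_add]; congr 1; field_simp; ring
  set s : ℝ := π ^ 2 * m ^ 2 / (2 * α) with hsdef
  have hs : 0 ≤ s := by positivity
  have h34 : (2 + 16 * π ^ 2 * m ^ 2 / α) * Real.exp (-s) ≤ 34 := by
    have h16 : 16 * π ^ 2 * m ^ 2 / α = 32 * s := by rw [hsdef]; field_simp; ring
    have he1 : Real.exp (-s) ≤ 1 := Real.exp_le_one_iff.2 (by linarith)
    have he2 : s * Real.exp (-s) ≤ 1 := by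
      have h := Real.add_one_le_exp s
      have hmul : Real.exp s * Real.exp (-s) = 1 := by rw [← Real.exp_add]; simp
      nlinarith [Real.exp_pos (-s)]
    rw [h16]; nlinarith [Real.exp_pos (-s)]
  have hsq : Real.sqrt α * Real.sqrt α = α := Real.mul_self_sqrt hα0.le
  have hsq1 : Real.sqrt α ≤ 1 := by
    rw [show (1:ℝ) = Real.sqrt 1 from (Real.sqrt_one).symm]
    exact Real.sqrt_le_sqrt hα1
  have hαsq : α ≤ Real.sqrt α := by
    calc α = Real.sqrt α * Real.sqrt α := hsq.symm
      _ ≤ Real.sqrt α * 1 := mul_le_mul_of_nonneg_left hsq1 (Real.sqrt_nonneg α)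
      _ = Real.sqrt α := mul_one _
  have hfac : Real.exp (-s) ≤ (4 / π ^ 2 * Real.sqrt α) * Real.exp (-(π ^ 2) / 4) ^ (n + 1) := by
    have hinv0 : 0 < α⁻¹ := inv_pos.2 hα0
    have hinv : 1 ≤ α⁻¹ := by nlinarith [mul_inv_cancel₀ hα0.ne']
    have hmono : Real.exp (-s) ≤
        Real.exp (-(π ^ 2 / (4 * α))) * Real.exp (-(π ^ 2) * m / 4) := by
      rw [← Real.exp_add]
      apply Real.exp_le_exp.2
      have e1 : -s = -(π ^ 2) * m ^ 2 * α⁻¹ / 2 := by rw [hsdef]; field_simp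
      have e2 : -(π ^ 2 / (4 * α)) = -(π ^ 2) * α⁻¹ / 4 := by field_simp
      rw [e1, e2]
      nlinarith [sq_nonneg π, mul_nonneg (mul_nonneg (sub_nonneg.2 hm) hinv0.le) (sq_nonneg π),
        mul_nonneg (mul_nonneg (mul_nonneg (sub_nonneg.2 hm) (sub_nonneg.2 hinv)) hm0.le) (sq_nonneg π),
        mul_nonneg (mul_nonneg (sub_nonneg.2 hinv) hm0.le) (sq_nonneg π)]
    have htexp : Real.exp (-(π ^ 2 / (4 * α))) ≤ 4 / π ^ 2 * Real.sqrt α := by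
      have ht : 0 < π ^ 2 / (4 * α) := by positivity
      have h := Real.add_one_le_exp (π ^ 2 / (4 * α))
      have hkey : Real.exp (-(π ^ 2 / (4 * α))) ≤ (π ^ 2 / (4 * α))⁻¹ := by
        rw [Real.exp_neg]
        exact inv_anti₀ ht (by linarith)
      have heq : (π ^ 2 / (4 * α))⁻¹ = 4 * α / π ^ 2 := by
        rw [inv_div]
      calc Real.exp (-(π ^ 2 / (4 * α))) ≤ (π ^ 2 / (4 * α))⁻¹ := hkey
        _ = 4 * α / π ^ 2 := heq
        _ ≤ 4 / π ^ 2 * Real.sqrt α := by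
            have h5 : 4 * α / π ^ 2 ≤ 4 * Real.sqrt α / π ^ 2 := by gcongr
            have h6 : 4 / π ^ 2 * Real.sqrt α = 4 * Real.sqrt α / π ^ 2 := by ring
            linarith
    have hpow : Real.exp (-(π ^ 2) * m / 4) = Real.exp (-(π ^ 2) / 4) ^ (n + 1) := by
      rw [← Real.exp_nat_mul]
      congr 1
      rw [hmdef]; push_cast; ring
    calc Real.exp (-s) ≤ Real.exp (-(π ^ 2 / (4 * α))) * Real.exp (-(π ^ 2) * m / 4) := hmono
      _ ≤ (4 / π ^ 2 * Real.sqrt α) * Real.exp (-(π ^ 2) * m / 4) :=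
          mul_le_mul_of_nonneg_right htexp (Real.exp_pos _).le
      _ = (4 / π ^ 2 * Real.sqrt α) * Real.exp (-(π ^ 2) / 4) ^ (n + 1) := by rw [hpow]
  have hENN : Real.exp (-s) = Real.exp (-(π ^ 2 * m ^ 2 / (2 * α))) := rfl
  calc |Real.exp (-4 * π ^ 2 * m ^ 2 / α) *
      (2 * Real.cosh x - 4 * π * m / ψ * Real.sinh x)|
      ≤ (2 + 16 * π ^ 2 * m ^ 2 / α) * Real.exp (x + -4 * π ^ 2 * m ^ 2 / α) := habs
    _ ≤ (2 + 16 * π ^ 2 * m ^ 2 / α) * Real.exp (-(π ^ 2) * m ^ 2 / α) :=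
        mul_le_mul_of_nonneg_left hexp1 (by positivity)
    _ = ((2 + 16 * π ^ 2 * m ^ 2 / α) * Real.exp (-s)) * Real.exp (-s) := by
        rw [hsplit]; ring
    _ ≤ 34 * Real.exp (-s) := mul_le_mul_of_nonneg_right h34 (Real.exp_pos _).le
    _ ≤ 34 * ((4 / π ^ 2 * Real.sqrt α) * Real.exp (-(π ^ 2) / 4) ^ (n + 1)) :=
        mul_le_mul_of_nonneg_left hfac (by norm_num)
    _ = (136 / π ^ 2) * Real.sqrt α * Real.exp (-(π ^ 2) / 4) ^ (n + 1) := by ring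

/-- There is a constant `K > 0` such that `|F_α(ψ) - 1| ≤ K√α` for all
`α ∈ (0,1]` and all class angles `ψ ∈ (0, 3π/4]`. -/
theorem stmt10 :
    ∃ K > (0 : ℝ), ∀ α ∈ Set.Ioc (0 : ℝ) 1, ∀ ψ ∈ Set.Ioc (0 : ℝ) (3 * π / 4),
      |Fcorr α ψ - 1| ≤ K * Real.sqrt α := by
  have hπ : 0 < π := Real.pi_pos
  refine ⟨136 / π ^ 2, by positivity, ?_⟩
  rintro α ⟨hα0, hα1⟩ ψ ⟨hψ0, hψ1⟩
  set r : ℝ := Real.exp (-(π ^ 2) / 4) with hr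
  have hr0 : 0 < r := Real.exp_pos _
  have hr1 : r < 1 := by
    rw [hr, Real.exp_lt_one_iff]
    have : 0 < π ^ 2 / 4 := by positivity
    linarith
  have hrhalf : r ≤ 1 / 2 := by
    have hπ3 : 3 < π := Real.pi_gt_three
    have h1 : r ≤ Real.exp (-2) := by
      apply Real.exp_le_exp.2
      nlinarith
    have h2 : Real.exp (-2) ≤ 1 / 2 := by
      rw [Real.exp_neg]
      have h3 : (2:ℝ) ≤ Real.exp 2 := by nlinarith [Real.add_one_le_exp (2:ℝ)]
      have h4 : Real.exp 2 * (Real.exp 2)⁻¹ = 1 := mul_inv_cancel₀ (Real.exp_ne_zero 2)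
      nlinarith [inv_pos.2 (Real.exp_pos 2)]
    linarith
  have h1r : 0 < 1 - r := by linarith
  have hfrac : r * (1 - r)⁻¹ ≤ 1 := by
    rw [← div_eq_mul_inv, div_le_one h1r]; linarith
  have hgeo : HasSum (fun k : ℕ => r ^ k) (1 - r)⁻¹ :=
    hasSum_geometric_of_lt_one hr0.le hr1
  have hgeo2 : HasSum (fun k : ℕ => 136 / π ^ 2 * Real.sqrt α * r ^ (k + 1))
      (136 / π ^ 2 * Real.sqrt α * r * (1 - r)⁻¹) := by
    have h := hgeo.mul_left (136 / π ^ 2 * Real.sqrt α * r)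
    have heq : (fun k : ℕ => 136 / π ^ 2 * Real.sqrt α * r ^ (k + 1)) =
        fun k : ℕ => 136 / π ^ 2 * Real.sqrt α * r * r ^ k := by
      funext k; rw [pow_succ]; ring
    rw [heq]; exact h
  have hb : ∀ n : ℕ, ‖Real.exp (-4 * π ^ 2 * ((n : ℝ) + 1) ^ 2 / α) *
      (2 * Real.cosh (4 * π * ((n : ℝ) + 1) * ψ / α) -
        (4 * π * ((n : ℝ) + 1) / ψ) * Real.sinh (4 * π * ((n : ℝ) + 1) * ψ / α))‖ ≤
      136 / π ^ 2 * Real.sqrt α * r ^ (n + 1) := by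
    intro n
    rw [Real.norm_eq_abs, hr]
    exact term_bound α ψ hα0 hα1 hψ0 hψ1 n
  have hnorm := tsum_of_norm_bounded hgeo2 hb
  have hFeq : Fcorr α ψ - 1 = ∑' n : ℕ, Real.exp (-4 * π ^ 2 * ((n : ℝ) + 1) ^ 2 / α) *
      (2 * Real.cosh (4 * π * ((n : ℝ) + 1) * ψ / α) -
        (4 * π * ((n : ℝ) + 1) / ψ) * Real.sinh (4 * π * ((n : ℝ) + 1) * ψ / α)) := by
    rw [Fcorr, add_sub_cancel_left]
  rw [hFeq, ← Real.norm_eq_abs]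
  calc ‖∑' n : ℕ, Real.exp (-4 * π ^ 2 * ((n : ℝ) + 1) ^ 2 / α) *
      (2 * Real.cosh (4 * π * ((n : ℝ) + 1) * ψ / α) -
        (4 * π * ((n : ℝ) + 1) / ψ) * Real.sinh (4 * π * ((n : ℝ) + 1) * ψ / α))‖
      ≤ 136 / π ^ 2 * Real.sqrt α * r * (1 - r)⁻¹ := hnorm
    _ = 136 / π ^ 2 * Real.sqrt α * (r * (1 - r)⁻¹) := by ring
    _ ≤ 136 / π ^ 2 * Real.sqrt α * 1 :=
        mul_le_mul_of_nonneg_left hfrac (by positivity)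
    _ = 136 / π ^ 2 * Real.sqrt α := by ring
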